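/- arXiv:2011.12823 — 12 statements merged into one kernel-verified Lean document; each statement's English description precedes it below -/
import Mathlib

section
/- Let a ∈ ℝ^n and d ∈ ℝ^n be vectors such that ∑_{ℓ} a_ℓ = 1, a_ℓ > 0 for all ℓ, and d_ℓ > -a_ℓ for all ℓ. Then ∑_{ℓ=1}^n (d_ℓ - a_ℓ·ln(1 + d_ℓ/a_ℓ)) ≥ ‖d‖₁ - ln(1 + ‖d‖₁), where ‖d‖₁ = ∑_ℓ |d_ℓ|. -/
/-!
Negative entries only make the left-hand side larger: for `-a < d < 0`, replacing `d` by `|d|`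
decreases `d - a log (1 + d / a)`, because `log (1 + u) - log (1 - u) ≥ 2u` on `[0, 1)`.
For nonnegative entries, concavity of `log` (Jensen with the weights `a`) gives
`∑ a log (1 + |d| / a) ≤ log (∑ a (1 + |d| / a)) = log (1 + ‖d‖₁)`.
-/

open Real Finset

theorem Real.two_mul_le_log_one_add_sub_log_one_sub {u : ℝ} (hu₀ : 0 ≤ u) (hu₁ : u < 1) :
    2 * u ≤ log (1 + u) - log (1 - u) := by
  -- `2u` is the first term of the nonnegative series `2 ∑ u^(2k+1) / (2k+1)`.
  have hs := hasSum_log_sub_log_of_abs_lt_one (abs_lt.2 ⟨by linarith, hu₁⟩)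
  simpa using le_hasSum hs 0 fun k _ => by positivity

theorem Real.abs_sub_mul_log_one_add_div_le {a d : ℝ} (ha : 0 < a) (hd : -a < d) :
    |d| - a * log (1 + |d| / a) ≤ d - a * log (1 + d / a) := by
  rcases le_or_gt 0 d with hd₀ | hd₀
  · rw [abs_of_nonneg hd₀]
  · rw [abs_of_neg hd₀, neg_div]
    have key := two_mul_le_log_one_add_sub_log_one_sub (u := -(d / a))
      (neg_nonneg.2 (div_nonpos_of_nonpos_of_nonneg hd₀.le ha.le))
      (by rw [neg_lt, lt_div_iff₀ ha]; linarith)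
    rw [sub_neg_eq_add] at key
    have hda : a * (d / a) = d := mul_div_cancel₀ _ ha.ne'
    nlinarith [mul_le_mul_of_nonneg_left key ha.le]

theorem Real.sum_mul_log_one_add_div_le {ι : Type*} (s : Finset ι) {a x : ι → ℝ}
    (hsum : ∑ i ∈ s, a i = 1) (ha : ∀ i ∈ s, 0 < a i) (hx : ∀ i ∈ s, -a i < x i) :
    ∑ i ∈ s, a i * log (1 + x i / a i) ≤ log (1 + ∑ i ∈ s, x i) := by
  have hpos : ∀ i ∈ s, 1 + x i / a i ∈ Set.Ioi 0 := fun i hi => by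
    rw [Set.mem_Ioi, ← neg_lt_iff_pos_add', lt_div_iff₀ (ha i hi)]
    linarith [hx i hi]
  have hmean : ∑ i ∈ s, a i * (1 + x i / a i) = 1 + ∑ i ∈ s, x i := by
    rw [sum_congr rfl fun i hi => by rw [mul_add, mul_one, mul_div_cancel₀ _ (ha i hi).ne'],
      sum_add_distrib, hsum]
  simpa only [smul_eq_mul, hmean] using
    strictConcaveOn_log_Ioi.concaveOn.le_map_sum (fun i hi => (ha i hi).le) hsum hpos

theorem sum_sub_log_ge_l1_sub_log {n : ℕ} (a d : Fin n → ℝ)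
    (hsum : ∑ ℓ, a ℓ = 1) (ha : ∀ ℓ, 0 < a ℓ) (hd : ∀ ℓ, -a ℓ < d ℓ) :
    ∑ ℓ, (d ℓ - a ℓ * Real.log (1 + d ℓ / a ℓ)) ≥
      (∑ ℓ, |d ℓ|) - Real.log (1 + ∑ ℓ, |d ℓ|) := by
  have jensen := sum_mul_log_one_add_div_le univ hsum (fun ℓ _ => ha ℓ)
    (fun ℓ _ => (neg_neg_of_pos (ha ℓ)).trans_le (abs_nonneg (d ℓ)))
  calc (∑ ℓ, |d ℓ|) - Real.log (1 + ∑ ℓ, |d ℓ|)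
      ≤ ∑ ℓ, (|d ℓ| - a ℓ * Real.log (1 + |d ℓ| / a ℓ)) := by
        rw [sum_sub_distrib]; linarith
    _ ≤ ∑ ℓ, (d ℓ - a ℓ * Real.log (1 + d ℓ / a ℓ)) :=
        sum_le_sum fun ℓ _ => abs_sub_mul_log_one_add_div_le (ha ℓ) (hd ℓ)
end

section
/- Let A be a non-zero n×n matrix with nonnegative entries and let r, c ∈ ℝ₊^n with ‖r‖₁ = ‖c‖₁ = 1. Suppose (r, c) lies in the convex hull of the set Ω = {(e_i, e_j) ∈ ℝ^n × ℝ^n : A_{ij} > 0}, where e_i denotes the i-th standard basis vector. Let μ be the smallest non-zero entry of A. Then the function F(x, y) = ln(∑_{i,j} A_{ij} e^{x_i + y_j}) - ⟨r, x⟩ - ⟨c, y⟩ satisfies F(x, y) ≥ ln(μ) for all x, y ∈ ℝ^n. -/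
/-- Lower bound `F(x,y) ≥ ln μ` on the logarithmic scaling potential, assuming `(r,c)`
lies in the convex hull of `Ω = {(e_i, e_j) : A_{ij} > 0}` and `μ` is the smallest
non-zero entry of the nonnegative non-zero matrix `A`. -/
theorem logPotential_lower_bound {n : ℕ} (A : Fin n → Fin n → ℝ)
    (hA : ∀ i j, 0 ≤ A i j) (hA0 : A ≠ 0) (μ : ℝ) (hμpos : 0 < μ)
    (hμle : ∀ i j, A i j ≠ 0 → μ ≤ A i j) (hμmem : ∃ i j, A i j = μ)
    (r c : Fin n → ℝ) (hr : ∀ i, 0 ≤ r i) (hc : ∀ j, 0 ≤ c j)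
    (hr1 : ∑ i, r i = 1) (hc1 : ∑ j, c j = 1)
    (hconv : (r, c) ∈ convexHull ℝ {p : (Fin n → ℝ) × (Fin n → ℝ) |
        ∃ i j, 0 < A i j ∧ p = (Pi.single i 1, Pi.single j 1)}) :
    ∀ x y : Fin n → ℝ,
      Real.log μ ≤ Real.log (∑ i, ∑ j, A i j * Real.exp (x i + y j))
          - (∑ i, r i * x i) - ∑ j, c j * y j := by
  intro x y
  classical
  -- the set of positive entries
  set P : Finset (Fin n × Fin n) :=
    Finset.univ.filter (fun ij => 0 < A ij.1 ij.2) with hP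
  have hPne : P.Nonempty := by
    by_contra h
    apply hA0
    funext i j
    have : (i, j) ∉ P := fun hm => h ⟨_, hm⟩
    simp only [hP, Finset.mem_filter, Finset.mem_univ, true_and] at this
    have := hA i j
    simp only [Pi.zero_apply]
    linarith [lt_or_eq_of_le (hA i j)]
  set M : ℝ := P.sup' hPne (fun ij => x ij.1 + y ij.2) with hM
  obtain ⟨⟨i0, j0⟩, hi0mem, hi0⟩ := P.exists_mem_eq_sup' hPne (fun ij => x ij.1 + y ij.2)
  have hApos : 0 < A i0 j0 := by
    simpa [hP] using hi0mem
  -- the half-space {p | L p ≤ M} is convex and contains Ω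
  have key : (∑ i, r i * x i) + ∑ j, c j * y j ≤ M := by
    have hsub : {p : (Fin n → ℝ) × (Fin n → ℝ) |
        ∃ i j, 0 < A i j ∧ p = (Pi.single i 1, Pi.single j 1)} ⊆
        {p : (Fin n → ℝ) × (Fin n → ℝ) |
          (∑ i, p.1 i * x i) + ∑ j, p.2 j * y j ≤ M} := by
      rintro p ⟨i, j, hij, rfl⟩
      have h1 : (∑ k, (Pi.single i (1:ℝ) : Fin n → ℝ) k * x k) = x i := by
        rw [Finset.sum_eq_single i]
        · simp
        · intro b _ hb; simp [Pi.single_apply, hb]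
        · simp
      have h2 : (∑ k, (Pi.single j (1:ℝ) : Fin n → ℝ) k * y k) = y j := by
        rw [Finset.sum_eq_single j]
        · simp
        · intro b _ hb; simp [Pi.single_apply, hb]
        · simp
      simp only [Set.mem_setOf_eq, h1, h2]
      exact Finset.le_sup' (f := fun ij => x ij.1 + y ij.2)
        (by simp [hP, hij] : ((i, j) : Fin n × Fin n) ∈ P)
    have hcvx : Convex ℝ {p : (Fin n → ℝ) × (Fin n → ℝ) |
          (∑ i, p.1 i * x i) + ∑ j, p.2 j * y j ≤ M} := by
      intro p hp q hq a b ha hb hab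
      simp only [Set.mem_setOf_eq] at hp hq ⊢
      have : (∑ i, (a • p + b • q).1 i * x i) + ∑ j, (a • p + b • q).2 j * y j
          = a * ((∑ i, p.1 i * x i) + ∑ j, p.2 j * y j)
            + b * ((∑ i, q.1 i * x i) + ∑ j, q.2 j * y j) := by
        simp only [Prod.fst_add, Prod.snd_add, Prod.smul_fst, Prod.smul_snd,
          Pi.add_apply, Pi.smul_apply, smul_eq_mul]
        simp only [add_mul, Finset.sum_add_distrib, mul_assoc, ← Finset.mul_sum]
        ring
      rw [this]
      have hMM : a * M + b * M = M := by rw [← add_mul, hab, one_mul]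
      have h1 := mul_le_mul_of_nonneg_left hp ha
      have h2 := mul_le_mul_of_nonneg_left hq hb
      linarith
    have := convexHull_min hsub hcvx hconv
    simpa using this
  -- bound the sum from below
  have hsum : μ * Real.exp M ≤ ∑ i, ∑ j, A i j * Real.exp (x i + y j) := by
    have h1 : A i0 j0 * Real.exp (x i0 + y j0) ≤ ∑ j, A i0 j * Real.exp (x i0 + y j) :=
      Finset.single_le_sum (f := fun j => A i0 j * Real.exp (x i0 + y j))
        (fun j _ => mul_nonneg (hA i0 j) (Real.exp_pos _).le) (Finset.mem_univ j0)
    have h2 : (∑ j, A i0 j * Real.exp (x i0 + y j)) ≤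
        ∑ i, ∑ j, A i j * Real.exp (x i + y j) :=
      Finset.single_le_sum (f := fun i => ∑ j, A i j * Real.exp (x i + y j))
        (fun i _ => Finset.sum_nonneg fun j _ => mul_nonneg (hA i j) (Real.exp_pos _).le)
        (Finset.mem_univ i0)
    have hμA : μ ≤ A i0 j0 := hμle i0 j0 (ne_of_gt hApos)
    have : μ * Real.exp M ≤ A i0 j0 * Real.exp (x i0 + y j0) := by
      rw [hM, hi0]
      exact mul_le_mul_of_nonneg_right hμA (Real.exp_pos _).le
    linarith
  have hlog : Real.log (μ * Real.exp M) ≤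
      Real.log (∑ i, ∑ j, A i j * Real.exp (x i + y j)) :=
    Real.log_le_log (by positivity) hsum
  rw [Real.log_mul (ne_of_gt hμpos) (ne_of_gt (Real.exp_pos _)), Real.log_exp] at hlog
  linarith
end

section
/- Let A ∈ [0,1]^{n×n} with ∑_{i,j} A_{ij} ≤ 1 and all non-zero entries at least μ > 0, and let r, c ∈ ℝ₊^n with ‖r‖₁ = ‖c‖₁ = 1. Suppose (r, c) lies in the convex hull of {(e_i, e_j) : A_{ij} > 0}. Then the potential f(x, y) = ∑_{i,j} A_{ij} e^{x_i + y_j} - ⟨r, x⟩ - ⟨c, y⟩ satisfies f(0, 0) - inf_{x,y} f(x, y) ≤ ln(1/μ). -/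
/-- The matrix-scaling potential `f(x,y) = ∑ A_{ij} e^{x_i+y_j} - ⟨r,x⟩ - ⟨c,y⟩`. -/
noncomputable def scalingPotential {n : ℕ} (A : Fin n → Fin n → ℝ) (r c x y : Fin n → ℝ) : ℝ :=
  (∑ i, ∑ j, A i j * Real.exp (x i + y j)) - (∑ i, r i * x i) - ∑ j, c j * y j

lemma key_pt (A W t μ : ℝ) (hA : 0 ≤ A) (hW0 : 0 ≤ W) (hW1 : W ≤ 1) (hμ : 0 < μ)
    (h : W ≠ 0 → μ ≤ A) : W * (1 + Real.log μ) ≤ A * Real.exp t - W * t := by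
  rcases eq_or_lt_of_le hW0 with h0 | h0
  · rw [← h0]; simp; positivity
  · have hμA : μ ≤ A := h (ne_of_gt h0)
    have hApos : 0 < A := lt_of_lt_of_le hμ hμA
    have hAW : μ ≤ A / W := le_trans hμA (by rw [le_div_iff₀ h0]; nlinarith)
    have hkey : A * Real.exp t = W * Real.exp (t + Real.log (A / W)) := by
      rw [Real.exp_add, Real.exp_log (by positivity)]; field_simp
    have h1 : (t + Real.log (A / W)) + 1 ≤ Real.exp (t + Real.log (A / W)) :=
      Real.add_one_le_exp _
    have hlog : Real.log μ ≤ Real.log (A / W) := Real.log_le_log hμ hAW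
    nlinarith [mul_le_mul_of_nonneg_left h1 (le_of_lt h0)]

/-- Potential gap bound for Sinkhorn: `f(0,0) - inf f ≤ ln(1/μ)`. -/
theorem potential_gap_bound {n : ℕ} (A : Fin n → Fin n → ℝ) (μ : ℝ) (hμpos : 0 < μ)
    (hA01 : ∀ i j, A i j ∈ Set.Icc (0 : ℝ) 1) (hAsum : ∑ i, ∑ j, A i j ≤ 1)
    (hμle : ∀ i j, A i j ≠ 0 → μ ≤ A i j)
    (r c : Fin n → ℝ) (hr : ∀ i, 0 ≤ r i) (hc : ∀ j, 0 ≤ c j)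
    (hr1 : ∑ i, r i = 1) (hc1 : ∑ j, c j = 1)
    (hconv : (r, c) ∈ convexHull ℝ {p : (Fin n → ℝ) × (Fin n → ℝ) |
        ∃ i j, 0 < A i j ∧ p = (Pi.single i 1, Pi.single j 1)}) :
    ∀ x y : Fin n → ℝ,
      scalingPotential A r c 0 0 - scalingPotential A r c x y ≤ Real.log (1 / μ) := by
  classical
  intro x y
  have hn : 0 < n := by
    rcases Nat.eq_zero_or_pos n with h | h
    · subst h; simp at hr1
    · exact h
  rw [convexHull_eq] at hconv
  obtain ⟨ι, t, w, z, hw0, hw1, hzS, hcm⟩ := hconv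
  rw [Finset.centerMass_eq_of_sum_1 _ _ hw1] at hcm
  have hex : ∀ k ∈ t, ∃ p : Fin n × Fin n, 0 < A p.1 p.2 ∧
      z k = (Pi.single p.1 1, Pi.single p.2 1) := by
    intro k hk
    obtain ⟨i, j, hij, hzk⟩ := hzS k hk
    exact ⟨(i, j), hij, hzk⟩
  have : Nonempty (Fin n) := ⟨⟨0, hn⟩⟩
  set p : ι → Fin n × Fin n := fun k =>
    if h : ∃ p : Fin n × Fin n, 0 < A p.1 p.2 ∧ z k = (Pi.single p.1 1, Pi.single p.2 1)
    then h.choose else Classical.arbitrary _ with hp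
  have hpspec : ∀ k ∈ t, 0 < A (p k).1 (p k).2 ∧
      z k = (Pi.single (p k).1 1, Pi.single (p k).2 1) := by
    intro k hk
    have h := hex k hk
    simp only [hp, dif_pos h]
    exact h.choose_spec
  set W : Fin n → Fin n → ℝ := fun i j => ∑ k ∈ t.filter (fun k => p k = (i, j)), w k with hW
  have hW0 : ∀ i j, 0 ≤ W i j := fun i j =>
    Finset.sum_nonneg fun k hk => hw0 k (Finset.mem_filter.mp hk).1
  have hWsum : ∑ i, ∑ j, W i j = 1 := by
    rw [← hw1, ← Finset.sum_product']
    exact Finset.sum_fiberwise_of_maps_to (fun k _ => Finset.mem_univ (p k)) w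
  have hW1 : ∀ i j, W i j ≤ 1 := by
    intro i j
    rw [← hWsum]
    have := Finset.single_le_sum (f := fun ij : Fin n × Fin n => W ij.1 ij.2)
      (fun ij _ => hW0 ij.1 ij.2) (Finset.mem_univ (i, j))
    rw [← Finset.sum_product'] at *
    exact this
  have hWA : ∀ i j, W i j ≠ 0 → 0 < A i j := by
    intro i j h
    have : ∃ k ∈ t.filter (fun k => p k = (i, j)), w k ≠ 0 := by
      by_contra hcon
      push_neg at hcon
      exact h (Finset.sum_eq_zero hcon)
    obtain ⟨k, hk, -⟩ := this
    obtain ⟨hk1, hk2⟩ := Finset.mem_filter.mp hk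
    have := (hpspec k hk1).1
    rwa [hk2] at this
  -- marginals
  have hWrow : ∀ i, ∑ j, W i j = ∑ k ∈ t.filter (fun k => (p k).1 = i), w k := by
    intro i
    rw [← Finset.sum_fiberwise_of_maps_to (g := fun k => (p k).2)
      (fun k _ => Finset.mem_univ ((p k).2)) w]
    apply Finset.sum_congr rfl
    intro j _
    rw [hW, Finset.filter_filter]
    apply Finset.sum_congr _ (fun _ _ => rfl)
    apply Finset.filter_congr
    intro k _
    constructor
    · intro h; rw [h]; exact ⟨rfl, rfl⟩
    · rintro ⟨h1, h2⟩; exact Prod.ext h1 h2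
  have hWcol : ∀ j, ∑ i, W i j = ∑ k ∈ t.filter (fun k => (p k).2 = j), w k := by
    intro j
    rw [← Finset.sum_fiberwise_of_maps_to (g := fun k => (p k).1)
      (fun k _ => Finset.mem_univ ((p k).1)) w]
    apply Finset.sum_congr rfl
    intro i _
    rw [hW, Finset.filter_filter]
    apply Finset.sum_congr _ (fun _ _ => rfl)
    apply Finset.filter_congr
    intro k _
    constructor
    · intro h; rw [h]; exact ⟨rfl, rfl⟩
    · rintro ⟨h1, h2⟩; exact Prod.ext h2 h1
  have hrW : ∀ i, r i = ∑ j, W i j := by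
    intro i
    have hr' : r = ∑ k ∈ t, w k • (z k).1 := by
      have := congrArg Prod.fst hcm
      simp [Prod.fst_sum] at this
      exact this.symm
    rw [hWrow i, Finset.sum_filter, hr']
    rw [Finset.sum_apply]
    apply Finset.sum_congr rfl
    intro k hk
    rw [(hpspec k hk).2]
    simp only [Pi.smul_apply, smul_eq_mul]
    rw [Pi.single_apply]
    by_cases h : (p k).1 = i
    · rw [if_pos h, if_pos h.symm, mul_one]
    · rw [if_neg h, if_neg (fun hh => h hh.symm), mul_zero]
  have hcW : ∀ j, c j = ∑ i, W i j := by
    intro j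
    have hc' : c = ∑ k ∈ t, w k • (z k).2 := by
      have := congrArg Prod.snd hcm
      simp [Prod.snd_sum] at this
      exact this.symm
    rw [hWcol j, Finset.sum_filter, hc']
    rw [Finset.sum_apply]
    apply Finset.sum_congr rfl
    intro k hk
    rw [(hpspec k hk).2]
    simp only [Pi.smul_apply, smul_eq_mul]
    rw [Pi.single_apply]
    by_cases h : (p k).2 = j
    · rw [if_pos h, if_pos h.symm, mul_one]
    · rw [if_neg h, if_neg (fun hh => h hh.symm), mul_zero]
  clear_value W p
  -- lower bound on f(x,y)
  have hlin : (∑ i, r i * x i) + ∑ j, c j * y j = ∑ i, ∑ j, W i j * (x i + y j) := by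
    have h1 : (∑ i, r i * x i) = ∑ i, ∑ j, W i j * x i :=
      Finset.sum_congr rfl fun i _ => by rw [hrW i, Finset.sum_mul]
    have h2 : (∑ j, c j * y j) = ∑ i, ∑ j, W i j * y j :=
      calc ∑ j, c j * y j = ∑ j, ∑ i, W i j * y j :=
            Finset.sum_congr rfl fun j _ => by rw [hcW j, Finset.sum_mul]
        _ = ∑ i, ∑ j, W i j * y j := by rw [Finset.sum_comm]
    rw [h1, h2, ← Finset.sum_add_distrib]
    refine Finset.sum_congr rfl fun i _ => ?_
    rw [← Finset.sum_add_distrib]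
    exact Finset.sum_congr rfl fun j _ => (mul_add _ _ _).symm
  have hterm : ∀ i j, W i j * (1 + Real.log μ) ≤
      A i j * Real.exp (x i + y j) - W i j * (x i + y j) := by
    intro i j
    apply key_pt _ _ _ _ (hA01 i j).1 (hW0 i j) (hW1 i j) hμpos
    intro h
    exact hμle i j (ne_of_gt (hWA i j h))
  have hsum : ∑ i, ∑ j, W i j * (1 + Real.log μ) ≤
      ∑ i, ∑ j, (A i j * Real.exp (x i + y j) - W i j * (x i + y j)) :=
    Finset.sum_le_sum fun i _ => Finset.sum_le_sum fun j _ => hterm i j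
  have e1 : ∑ i, ∑ j, (A i j * Real.exp (x i + y j) - W i j * (x i + y j)) =
      (∑ i, ∑ j, A i j * Real.exp (x i + y j)) - ∑ i, ∑ j, W i j * (x i + y j) := by
    simp [Finset.sum_sub_distrib]
  have e2 : ∑ i, ∑ j, W i j * (1 + Real.log μ) = 1 + Real.log μ := by
    simp_rw [← Finset.sum_mul]
    rw [hWsum, one_mul]
  have hlow : 1 + Real.log μ ≤ scalingPotential A r c x y := by
    unfold scalingPotential
    rw [sub_sub, hlin]
    linarith
  -- conclude
  have hf00 : scalingPotential A r c 0 0 = ∑ i, ∑ j, A i j := by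
    unfold scalingPotential
    simp
  rw [hf00, one_div, Real.log_inv]
  linarith
end

section
/- Let A ∈ ℝ₊^{n×n}, let r ∈ ℝ₊^n be a probability vector, and x, y ∈ ℝ^n. Suppose x̂ ∈ ℝ^n satisfies |x̂_ℓ - ln(r_ℓ / ∑_j A_{ℓj} e^{y_j})| ≤ δ for all ℓ ∈ [n], where δ ∈ [0,1] (in particular every row of A has positive sum). Then f(x, y) - f(x̂, y) ≥ D(r ‖ r(A(x,y))) - 2δ, where f(x, y) = ∑_{i,j} A_{ij} e^{x_i + y_j} - ⟨r, x⟩ - ⟨c, y⟩ (for any fixed c), A(x,y) is the matrix with entries A_{ij} e^{x_i + y_j}, r(B) is the vector of row sums of B, and D(a‖b) = ∑_ℓ (b_ℓ - a_ℓ + a_ℓ ln(a_ℓ/b_ℓ)). -/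
lemma exp_sub_le_aux (z : ℝ) (hz : |z| ≤ 1) : Real.exp z - z ≤ 1 + 2 * |z| := by
  rcases le_or_gt z 0 with h | h
  · have h1 : Real.exp z ≤ 1 := Real.exp_le_one_iff.mpr h
    have h2 : |z| = -z := abs_of_nonpos h
    nlinarith
  · have hb := Real.exp_bound (x := z) hz (n := 2) (by norm_num)
    have hsum : ∑ i ∈ Finset.range 2, z ^ i / (Nat.factorial i) = 1 + z := by
      simp [Finset.sum_range_succ]
    rw [hsum] at hb
    have hb' : Real.exp z - (1 + z) ≤ |z| ^ 2 * ((2 : ℕ).succ / ((2 : ℕ).factorial * 2)) :=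
      le_trans (le_abs_self _) hb
    have hz2 : |z| ^ 2 ≤ |z| := by nlinarith [abs_nonneg z]
    have : ((2 : ℕ).succ / ((2 : ℕ).factorial * 2) : ℝ) = 3 / 4 := by norm_num [Nat.factorial]
    rw [this] at hb'
    nlinarith [abs_nonneg z]

/-- Progress of a δ-approximate full Sinkhorn row update:
`f(x,y) - f(x̂,y) ≥ D(r ‖ r(A(x,y))) - 2δ`. -/
theorem sinkhorn_row_update_progress {n : ℕ} (A : Fin n → Fin n → ℝ)
    (hA : ∀ i j, 0 ≤ A i j) (r c : Fin n → ℝ) (hr : ∀ i, 0 < r i)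
    (hr1 : ∑ i, r i = 1) (x y xh : Fin n → ℝ) (δ : ℝ) (hδ : δ ∈ Set.Icc (0 : ℝ) 1)
    (hrow : ∀ ℓ, 0 < ∑ j, A ℓ j * Real.exp (y j))
    (hxh : ∀ ℓ, |xh ℓ - Real.log (r ℓ / ∑ j, A ℓ j * Real.exp (y j))| ≤ δ) :
    scalingPotential A r c x y - scalingPotential A r c xh y ≥
      (∑ ℓ, ((∑ j, A ℓ j * Real.exp (x ℓ + y j)) - r ℓ
        + r ℓ * Real.log (r ℓ / ∑ j, A ℓ j * Real.exp (x ℓ + y j)))) - 2 * δ := by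
  obtain ⟨hδ0, hδ1⟩ := hδ
  set S : Fin n → ℝ := fun ℓ => ∑ j, A ℓ j * Real.exp (y j) with hSdef
  have hS : ∀ ℓ, 0 < S ℓ := hrow
  -- row sums factor
  have hfac : ∀ (u : Fin n → ℝ) ℓ, (∑ j, A ℓ j * Real.exp (u ℓ + y j)) = Real.exp (u ℓ) * S ℓ := by
    intro u ℓ
    rw [hSdef, Finset.mul_sum]
    refine Finset.sum_congr rfl fun j _ => ?_
    rw [Real.exp_add]; ring
  -- log rewrite
  have hlog : ∀ ℓ, Real.log (r ℓ / (Real.exp (x ℓ) * S ℓ))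
      = Real.log (r ℓ / S ℓ) - x ℓ := by
    intro ℓ
    rw [Real.log_div (hr ℓ).ne' (mul_pos (Real.exp_pos _) (hS ℓ)).ne', Real.log_mul (Real.exp_pos _).ne' (hS ℓ).ne',
      Real.log_exp, Real.log_div (hr ℓ).ne' (hS ℓ).ne']
    ring
  -- termwise key inequality
  have hterm : ∀ ℓ, Real.exp (xh ℓ) * S ℓ - r ℓ * xh ℓ
      ≤ r ℓ - r ℓ * Real.log (r ℓ / S ℓ) + 2 * δ * r ℓ := by
    intro ℓ
    set z : ℝ := xh ℓ - Real.log (r ℓ / S ℓ) with hzdef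
    clear_value z
    have hz : |z| ≤ δ := hzdef ▸ hxh ℓ
    have hz1 : |z| ≤ 1 := hz.trans hδ1
    have hexp : Real.exp (xh ℓ) * S ℓ = Real.exp z * r ℓ := by
      have : xh ℓ = z + Real.log (r ℓ / S ℓ) := by rw [hzdef]; ring
      rw [this, Real.exp_add, Real.exp_log (div_pos (hr ℓ) (hS ℓ))]
      field_simp
      rw [mul_div_assoc, div_self (hS ℓ).ne', mul_one]
    have hkey := exp_sub_le_aux z hz1
    have habs : Real.exp z - z ≤ 1 + 2 * δ := by linarith [hz]
    have hxhℓ : xh ℓ = z + Real.log (r ℓ / S ℓ) := by rw [hzdef]; ring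
    rw [hexp, hxhℓ]
    have hrℓ := (hr ℓ).le
    have := mul_le_mul_of_nonneg_left habs hrℓ
    nlinarith [this]
  -- sum the termwise inequality
  have hsum : ∑ ℓ, (Real.exp (xh ℓ) * S ℓ - r ℓ * xh ℓ)
      ≤ ∑ ℓ, (r ℓ - r ℓ * Real.log (r ℓ / S ℓ) + 2 * δ * r ℓ) :=
    Finset.sum_le_sum fun ℓ _ => hterm ℓ
  have hL : ∑ ℓ, (Real.exp (xh ℓ) * S ℓ - r ℓ * xh ℓ)
      = (∑ ℓ, Real.exp (xh ℓ) * S ℓ) - ∑ ℓ, r ℓ * xh ℓ := by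
    rw [Finset.sum_sub_distrib]
  have hR : ∑ ℓ, (r ℓ - r ℓ * Real.log (r ℓ / S ℓ) + 2 * δ * r ℓ)
      = 1 - (∑ ℓ, r ℓ * Real.log (r ℓ / S ℓ)) + 2 * δ := by
    rw [Finset.sum_add_distrib, Finset.sum_sub_distrib, ← Finset.mul_sum, hr1]
    ring
  rw [hL, hR] at hsum
  -- rewrite the goal
  unfold scalingPotential
  have hgx : ∀ ℓ, ((∑ j, A ℓ j * Real.exp (x ℓ + y j)) - r ℓ
        + r ℓ * Real.log (r ℓ / ∑ j, A ℓ j * Real.exp (x ℓ + y j)))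
      = Real.exp (x ℓ) * S ℓ - r ℓ + r ℓ * Real.log (r ℓ / S ℓ) - r ℓ * x ℓ := by
    intro ℓ
    rw [hfac x ℓ, hlog ℓ]; ring
  rw [Finset.sum_congr rfl fun ℓ _ => hgx ℓ]
  have e1 : ∑ i, ∑ j, A i j * Real.exp (x i + y j) = ∑ ℓ, Real.exp (x ℓ) * S ℓ :=
    Finset.sum_congr rfl fun ℓ _ => hfac x ℓ
  have e2 : ∑ i, ∑ j, A i j * Real.exp (xh i + y j) = ∑ ℓ, Real.exp (xh ℓ) * S ℓ :=
    Finset.sum_congr rfl fun ℓ _ => hfac xh ℓ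
  rw [e1, e2]
  have esplit : ∑ ℓ, (Real.exp (x ℓ) * S ℓ - r ℓ + r ℓ * Real.log (r ℓ / S ℓ) - r ℓ * x ℓ)
      = (∑ ℓ, Real.exp (x ℓ) * S ℓ) - (∑ ℓ, r ℓ) + (∑ ℓ, r ℓ * Real.log (r ℓ / S ℓ))
        - ∑ ℓ, r ℓ * x ℓ := by
    rw [Finset.sum_sub_distrib, Finset.sum_add_distrib, Finset.sum_sub_distrib]
  rw [esplit, hr1]
  linarith
end

section
/- Let A ∈ ℝ₊^{n×n} with every row having positive sum, r ∈ ℝ₊^n, and x, y ∈ ℝ^n. Define x̂ by x̂_ℓ = ln(r_ℓ / ∑_j A_{ℓj} e^{y_j}) for each ℓ. Then f(x, y) - f(x̂, y) = D(r ‖ r(A(x,y))), where f, A(x,y), r(·), and D are as in the Sinkhorn potential setup: f(x,y) = ∑_{i,j} A_{ij} e^{x_i+y_j} - ⟨r,x⟩ - ⟨c,y⟩ for any fixed c with ‖r‖₁ arbitrary, A(x,y)_{ij} = A_{ij} e^{x_i+y_j}, r(B)_i = ∑_j B_{ij}, and D(a‖b) = ∑_ℓ (b_ℓ - a_ℓ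 + a_ℓ ln(a_ℓ/b_ℓ)). -/
open Real Finset

lemma sum_mul_exp_add {ι : Type*} [Fintype ι] (a y : ι → ℝ) (t : ℝ) :
    ∑ j, a j * exp (t + y j) = exp t * ∑ j, a j * exp (y j) := by
  rw [mul_sum]
  exact sum_congr rfl fun j _ => by rw [exp_add]; ring

lemma scalingPotential_sub_scalingPotential_left {n : ℕ} (A : Fin n → Fin n → ℝ)
    (r c x x' y : Fin n → ℝ) :
    scalingPotential A r c x y - scalingPotential A r c x' y =
      ∑ ℓ, ((∑ j, A ℓ j * exp (x ℓ + y j)) - (∑ j, A ℓ j * exp (x' ℓ + y j))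
        - r ℓ * (x ℓ - x' ℓ)) := by
  simp only [scalingPotential, mul_sub, sum_sub_distrib]
  ring

lemma row_decrease_eq {r s : ℝ} (hr : 0 < r) (hs : 0 < s) (t : ℝ) :
    exp t * s - exp (log (r / s)) * s - r * (t - log (r / s)) =
      exp t * s - r + r * log (r / (exp t * s)) := by
  have hrow_sum : exp (log (r / s)) * s = r := by
    rw [exp_log (div_pos hr hs), div_mul_cancel₀ _ hs.ne']
  have hlog : log (r / (exp t * s)) = log (r / s) - t := by
    rw [log_div hr.ne' (by positivity), log_mul (exp_pos t).ne' hs.ne', log_exp,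
      log_div hr.ne' hs.ne']
    ring
  rw [hrow_sum, hlog]
  ring

theorem sinkhorn_exact_row_update_general {n : ℕ} (A : Fin n → Fin n → ℝ)
    (r c : Fin n → ℝ) (hr : ∀ i, 0 < r i)
    (x y : Fin n → ℝ) (hrow : ∀ ℓ, 0 < ∑ j, A ℓ j * Real.exp (y j)) :
    scalingPotential A r c x y -
        scalingPotential A r c (fun ℓ => Real.log (r ℓ / ∑ j, A ℓ j * Real.exp (y j))) y =
      ∑ ℓ, ((∑ j, A ℓ j * Real.exp (x ℓ + y j)) - r ℓ
        + r ℓ * Real.log (r ℓ / ∑ j, A ℓ j * Real.exp (x ℓ + y j))) := by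
  rw [scalingPotential_sub_scalingPotential_left]
  refine sum_congr rfl fun ℓ _ => ?_
  simp only [sum_mul_exp_add (A ℓ) y]
  exact row_decrease_eq (hr ℓ) (hrow ℓ) (x ℓ)

/-- Exact Sinkhorn row update: `f(x,y) - f(x̂,y) = D(r ‖ r(A(x,y)))` where
`x̂_ℓ = ln(r_ℓ / ∑_j A_{ℓj} e^{y_j})`. -/
theorem sinkhorn_exact_row_update {n : ℕ} (A : Fin n → Fin n → ℝ)
    (hA : ∀ i j, 0 ≤ A i j) (r c : Fin n → ℝ) (hr : ∀ i, 0 < r i)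
    (x y : Fin n → ℝ) (hrow : ∀ ℓ, 0 < ∑ j, A ℓ j * Real.exp (y j)) :
    scalingPotential A r c x y -
        scalingPotential A r c (fun ℓ => Real.log (r ℓ / ∑ j, A ℓ j * Real.exp (y j))) y =
      ∑ ℓ, ((∑ j, A ℓ j * Real.exp (x ℓ + y j)) - r ℓ
        + r ℓ * Real.log (r ℓ / ∑ j, A ℓ j * Real.exp (x ℓ + y j))) :=
  sinkhorn_exact_row_update_general A r c hr x y hrow
end

section
/- Let A ∈ ℝ₊^{n×n}, r ∈ ℝ₊^n, ℓ ∈ [n], x, y ∈ ℝ^n, δ ∈ [0,1], and let x̂ ∈ ℝ^n satisfy |x̂_ℓ - ln(r_ℓ / ∑_j A_{ℓj} e^{y_j})| ≤ δ and x̂_k = x_k for all k ≠ ℓ (assume ∑_j A_{ℓj} e^{y_j} > 0 and r_ℓ > 0). Then f(x, y) - f(x̂, y) ≥ ρ(r_ℓ ‖ r_ℓ(A(x,y))) - 2δ·r_ℓ, where ρ(a‖b) = b - a + a·ln(a/b), f(x,y) = ∑_{i,j} A_{ij} e^{x_i+y_j} - ⟨r,x⟩ - ⟨c,y⟩ for fixed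 c, A(x,y)_{ij} = A_{ij}e^{x_i+y_j}, and r_ℓ(B) = ∑_j B_{ℓj}. -/
lemma exp_sub_one_sub_le (u δ : ℝ) (hu : |u| ≤ δ) (hδ1 : δ ≤ 1) :
    Real.exp u - 1 - u ≤ 2 * δ := by
  obtain ⟨h1, h2⟩ := abs_le.mp hu
  rcases le_or_gt u 0 with h | h
  · have := Real.exp_le_one_iff.mpr h
    linarith
  · -- exp u ≤ 1 + u * (e - 1) by convexity on [0,1]
    have hu1 : u ≤ 1 := le_trans h2 hδ1
    have hc := convexOn_exp.2 (Set.mem_univ (0:ℝ)) (Set.mem_univ (1:ℝ))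
      (by linarith : (0:ℝ) ≤ 1 - u) h.le (by ring)
    simp only [smul_eq_mul, mul_zero, mul_one, zero_add] at hc
    have he : Real.exp 1 < 2.7182818286 := Real.exp_one_lt_d9
    have : Real.exp u ≤ (1 - u) * Real.exp 0 + u * Real.exp 1 := hc
    rw [Real.exp_zero] at this
    nlinarith

lemma key_ineq (S R t xs δ : ℝ) (hS : 0 < S) (hR : 0 < R)
    (hxs : xs = Real.log (R / S)) (ht : |t - xs| ≤ δ) (hδ1 : δ ≤ 1) :
    R * t - S * Real.exp t ≥ R * xs - R - 2 * δ * R := by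
  have hRS : Real.exp xs = R / S := by
    rw [hxs, Real.exp_log (div_pos hR hS)]
  have hSe : S * Real.exp xs = R := by
    rw [hRS]; field_simp
  have hexp : S * Real.exp t = R * Real.exp (t - xs) := by
    have : Real.exp t = Real.exp xs * Real.exp (t - xs) := by
      rw [← Real.exp_add]; ring_nf
    rw [this, ← mul_assoc, hSe]
  have h := exp_sub_one_sub_le (t - xs) δ ht hδ1
  have := mul_le_mul_of_nonneg_left h hR.le
  nlinarith

/-- Progress of a δ-approximate single-coordinate (randomized Sinkhorn) row update:
`f(x,y) - f(x̂,y) ≥ ρ(r_ℓ ‖ r_ℓ(A(x,y))) - 2δ·r_ℓ`. -/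
theorem sinkhorn_single_row_update_progress {n : ℕ} (A : Fin n → Fin n → ℝ)
    (hA : ∀ i j, 0 ≤ A i j) (r c : Fin n → ℝ) (ℓ : Fin n) (x y xh : Fin n → ℝ)
    (δ : ℝ) (hδ : δ ∈ Set.Icc (0 : ℝ) 1) (hrℓ : 0 < r ℓ)
    (hS : 0 < ∑ j, A ℓ j * Real.exp (y j))
    (hxhℓ : |xh ℓ - Real.log (r ℓ / ∑ j, A ℓ j * Real.exp (y j))| ≤ δ)
    (hxh : ∀ k, k ≠ ℓ → xh k = x k) :
    scalingPotential A r c x y - scalingPotential A r c xh y ≥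
      ((∑ j, A ℓ j * Real.exp (x ℓ + y j)) - r ℓ
        + r ℓ * Real.log (r ℓ / ∑ j, A ℓ j * Real.exp (x ℓ + y j))) - 2 * δ * r ℓ := by
  set S := ∑ j, A ℓ j * Real.exp (y j) with hSdef
  have hfac : ∀ t : ℝ, (∑ j, A ℓ j * Real.exp (t + y j)) = Real.exp t * S := by
    intro t
    rw [hSdef, Finset.mul_sum]
    refine Finset.sum_congr rfl fun j _ => ?_
    rw [Real.exp_add]; ring
  -- difference of double sums
  have hsum1 : (∑ i, ∑ j, A i j * Real.exp (x i + y j))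
      - (∑ i, ∑ j, A i j * Real.exp (xh i + y j))
      = Real.exp (x ℓ) * S - Real.exp (xh ℓ) * S := by
    rw [← Finset.sum_sub_distrib]
    rw [Finset.sum_eq_single ℓ]
    · rw [← Finset.sum_sub_distrib]
      rw [← hfac (x ℓ), ← hfac (xh ℓ), Finset.sum_sub_distrib]
    · intro i _ hi
      have : xh i = x i := hxh i hi
      simp [this]
    · intro h; exact absurd (Finset.mem_univ ℓ) h
  have hsum2 : (∑ i, r i * x i) - (∑ i, r i * xh i) = r ℓ * x ℓ - r ℓ * xh ℓ := by
    rw [← Finset.sum_sub_distrib]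
    rw [Finset.sum_eq_single ℓ]
    · intro i _ hi
      have : xh i = x i := hxh i hi
      simp [this]
    · intro h; exact absurd (Finset.mem_univ ℓ) h
  have hlog : Real.log (r ℓ / ∑ j, A ℓ j * Real.exp (x ℓ + y j))
      = Real.log (r ℓ / S) - x ℓ := by
    rw [hfac (x ℓ)]
    rw [div_mul_eq_div_div_swap, Real.log_div (by positivity) (by positivity),
      Real.log_exp]
  have hkey := key_ineq S (r ℓ) (xh ℓ) (Real.log (r ℓ / S)) δ hS hrℓ rfl hxhℓ hδ.2
  simp only [scalingPotential]
  rw [hlog, hfac (x ℓ)]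
  have h1 : (∑ i, ∑ j, A i j * Real.exp (x i + y j)) - (∑ i, r i * x i) - (∑ j, c j * y j)
      - ((∑ i, ∑ j, A i j * Real.exp (xh i + y j)) - (∑ i, r i * xh i) - (∑ j, c j * y j))
      = (Real.exp (x ℓ) * S - Real.exp (xh ℓ) * S) - (r ℓ * x ℓ - r ℓ * xh ℓ) := by
    rw [← hsum1, ← hsum2]; ring
  rw [h1]
  nlinarith
end

section
/- Let A ∈ ℝ₊^{n×n} with zero diagonal, let x ∈ ℝ^n, ℓ ∈ [n], and δ ∈ [0,1]. Suppose r_ℓ(A(x)) > 0 and c_ℓ(A(x)) > 0, where A(x)_{ij} = A_{ij} e^{x_i - x_j}, r_ℓ(B) = ∑_j B_{ℓj}, c_ℓ(B) = ∑_i B_{iℓ}. Let x' ∈ ℝ^n satisfy x'_k = x_k for k ≠ ℓ and |x'_ℓ - (x_ℓ + ln√(c_ℓ(A(x))/r_ℓ(A(x))))| ≤ δ. Then, with f(x) = ∑_{i,j} A_{ij} e^{x_i - x_j}, we have f(x) - f(x') ≥ (√(r_ℓ(A(x))) - √(c_ℓ(A(x))))² - 2δ·√(r_ℓ(A(x))·c_ℓ(A(x))).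 -/
open Real Finset

lemma cosh_aux {z : ℝ} (hz : |z| ≤ 1) : Real.exp z + Real.exp (-z) ≤ 2 + 2 * |z| := by
  have h1 := Real.exp_bound hz (n := 2) (by norm_num)
  have h2 := Real.exp_bound (x := -z) (by rwa [abs_neg]) (n := 2) (by norm_num)
  simp only [Finset.sum_range_succ, Finset.sum_range_zero, abs_neg] at h1 h2
  norm_num at h1 h2
  have hz2 : |z| ^ 2 ≤ |z| := by nlinarith [abs_nonneg z]
  rw [abs_le] at h1 h2
  nlinarith [abs_nonneg z, sq_abs z]


/-- Progress of a δ-approximate Osborne update for matrix balancing: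
`f(x) - f(x') ≥ (√r_ℓ - √c_ℓ)² - 2δ·√(r_ℓ c_ℓ)`, where `f(x) = ∑ A_{ij} e^{x_i - x_j}`
and `r_ℓ, c_ℓ` are the ℓ-th row and column sums of `A(x)`. -/
theorem osborne_update_progress {n : ℕ} (A : Fin n → Fin n → ℝ)
    (hA : ∀ i j, 0 ≤ A i j) (hdiag : ∀ i, A i i = 0)
    (x x' : Fin n → ℝ) (ℓ : Fin n) (δ : ℝ) (hδ : δ ∈ Set.Icc (0 : ℝ) 1)
    (hr : 0 < ∑ j, A ℓ j * Real.exp (x ℓ - x j))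
    (hc : 0 < ∑ i, A i ℓ * Real.exp (x i - x ℓ))
    (hx' : ∀ k, k ≠ ℓ → x' k = x k)
    (hx'ℓ : |x' ℓ - (x ℓ + Real.log (Real.sqrt
        ((∑ i, A i ℓ * Real.exp (x i - x ℓ)) / ∑ j, A ℓ j * Real.exp (x ℓ - x j))))| ≤ δ) :
    (∑ i, ∑ j, A i j * Real.exp (x i - x j)) - (∑ i, ∑ j, A i j * Real.exp (x' i - x' j)) ≥
      (Real.sqrt (∑ j, A ℓ j * Real.exp (x ℓ - x j))
          - Real.sqrt (∑ i, A i ℓ * Real.exp (x i - x ℓ))) ^ 2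
        - 2 * δ * Real.sqrt ((∑ j, A ℓ j * Real.exp (x ℓ - x j))
            * ∑ i, A i ℓ * Real.exp (x i - x ℓ)) := by
  set r := ∑ j, A ℓ j * Real.exp (x ℓ - x j) with hr_def
  set c := ∑ i, A i ℓ * Real.exp (x i - x ℓ) with hc_def
  set z := x' ℓ - (x ℓ + Real.log (Real.sqrt (c / r))) with hz_def
  have hzδ : |z| ≤ δ := hx'ℓ
  have hz1 : |z| ≤ 1 := hzδ.trans hδ.2
  have hsr : 0 < Real.sqrt r := Real.sqrt_pos.mpr hr
  have hsc : 0 < Real.sqrt c := Real.sqrt_pos.mpr hc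
  have hsqrt_cr : 0 < Real.sqrt (c / r) := Real.sqrt_pos.mpr (by positivity)
  have ht : x' ℓ - x ℓ = Real.log (Real.sqrt (c / r)) + z := by rw [hz_def]; ring
  have hexp_t : Real.exp (x' ℓ - x ℓ) = Real.sqrt c / Real.sqrt r * Real.exp z := by
    rw [ht, Real.exp_add, Real.exp_log hsqrt_cr, Real.sqrt_div hc.le]
  have hexp_nt : Real.exp (x ℓ - x' ℓ) = Real.sqrt r / Real.sqrt c * Real.exp (-z) := by
    rw [show x ℓ - x' ℓ = -(x' ℓ - x ℓ) by ring, Real.exp_neg, hexp_t, Real.exp_neg]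
    field_simp
  -- key identity
  have key : (∑ i, ∑ j, A i j * Real.exp (x i - x j))
      - (∑ i, ∑ j, A i j * Real.exp (x' i - x' j))
      = (1 - Real.exp (x' ℓ - x ℓ)) * r + (1 - Real.exp (x ℓ - x' ℓ)) * c := by
    rw [← Finset.sum_sub_distrib]
    simp_rw [← Finset.sum_sub_distrib]
    rw [← Finset.add_sum_erase _ _ (Finset.mem_univ ℓ)]
    congr 1
    · -- row term
      rw [hr_def, Finset.mul_sum]
      apply Finset.sum_congr rfl
      intro j _
      by_cases hj : j = ℓ
      · rw [hj]; simp [hdiag ℓ]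
      · rw [hx' j hj, show x' ℓ - x j = (x' ℓ - x ℓ) + (x ℓ - x j) by ring, Real.exp_add]
        ring
    · -- column part
      have herase : ∀ i ∈ Finset.univ.erase ℓ,
          (∑ j, (A i j * Real.exp (x i - x j) - A i j * Real.exp (x' i - x' j)))
          = (1 - Real.exp (x ℓ - x' ℓ)) * (A i ℓ * Real.exp (x i - x ℓ)) := by
        intro i hi
        have hiℓ : i ≠ ℓ := Finset.ne_of_mem_erase hi
        rw [Finset.sum_eq_single ℓ]
        · rw [hx' i hiℓ, show x i - x' ℓ = (x ℓ - x' ℓ) + (x i - x ℓ) by ring, Real.exp_add]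
          ring
        · intro j _ hj
          rw [hx' i hiℓ, hx' j hj]; ring
        · intro h; exact absurd (Finset.mem_univ ℓ) h
      rw [Finset.sum_congr rfl herase, ← Finset.mul_sum]
      congr 1
      rw [hc_def, ← Finset.add_sum_erase _ _ (Finset.mem_univ ℓ), hdiag ℓ]
      ring
  rw [key, hexp_t, hexp_nt]
  have hcosh := cosh_aux hz1
  have hsq_r : Real.sqrt r ^ 2 = r := Real.sq_sqrt hr.le
  have hsq_c : Real.sqrt c ^ 2 = c := Real.sq_sqrt hc.le
  have hsqrt_mul : Real.sqrt (r * c) = Real.sqrt r * Real.sqrt c := Real.sqrt_mul hr.le c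
  rw [hsqrt_mul]
  have h1 : Real.sqrt c / Real.sqrt r * Real.exp z * r
      = Real.sqrt r * Real.sqrt c * Real.exp z := by
    rw [div_mul_eq_mul_div, div_mul_eq_mul_div, div_eq_iff hsr.ne']
    linear_combination (-(Real.sqrt c * Real.exp z)) * hsq_r
  have h2 : Real.sqrt r / Real.sqrt c * Real.exp (-z) * c
      = Real.sqrt r * Real.sqrt c * Real.exp (-z) := by
    rw [div_mul_eq_mul_div, div_mul_eq_mul_div, div_eq_iff hsc.ne']
    linear_combination (-(Real.sqrt r * Real.exp (-z))) * hsq_c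
  nlinarith [mul_pos hsr hsc, abs_nonneg z,
    mul_le_mul_of_nonneg_left hcosh (mul_pos hsr hsc).le,
    mul_le_mul_of_nonneg_left hzδ (mul_pos hsr hsc).le]
end

section
/- Let A ∈ ℝ₊^{n×n} with non-zero entries at least μ > 0. Suppose the zero vector lies in the convex hull of W = {e_i - e_j : A_{ij} > 0}, where e_i are standard basis vectors in ℝ^n. Then for every x ∈ ℝ^n, f(x) = ∑_{i,j} A_{ij} e^{x_i - x_j} ≥ μ. -/
set_option maxHeartbeats 1000000 in
/-- Lower bound on the Osborne potential: if `0` lies in the convex hull of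
`W = {e_i - e_j : A_{ij} > 0}` and all non-zero entries of `A` are at least `μ > 0`,
then `∑ A_{ij} e^{x_i - x_j} ≥ μ` for every `x`. -/
theorem osborne_potential_lower_bound {n : ℕ} (A : Fin n → Fin n → ℝ)
    (hA : ∀ i j, 0 ≤ A i j) (μ : ℝ) (hμpos : 0 < μ)
    (hμle : ∀ i j, A i j ≠ 0 → μ ≤ A i j)
    (hconv : (0 : Fin n → ℝ) ∈ convexHull ℝ
      {v : Fin n → ℝ | ∃ i j, 0 < A i j ∧ v = Pi.single i 1 - Pi.single j 1}) :
    ∀ x : Fin n → ℝ, μ ≤ ∑ i, ∑ j, A i j * Real.exp (x i - x j) := by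
  intro x
  -- linear functional L v = ∑ i, x i * v i
  set L : (Fin n → ℝ) → ℝ := fun v => ∑ i, x i * v i with hL
  have hlin : IsLinearMap ℝ L := by
    constructor
    · intro u v
      simp [hL, mul_add, Finset.sum_add_distrib]
    · intro c v
      simp [hL, Finset.mul_sum, mul_left_comm]
  -- there exists (k, ℓ) with A k ℓ > 0 and x k - x ℓ ≥ 0
  have key : ∃ k ℓ, 0 < A k ℓ ∧ 0 ≤ x k - x ℓ := by
    by_contra h
    push_neg at h
    have hsub : {v : Fin n → ℝ | ∃ i j, 0 < A i j ∧ v = Pi.single i 1 - Pi.single j 1}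
        ⊆ {v | L v < 0} := by
      rintro v ⟨i, j, hij, rfl⟩
      have : L (Pi.single i 1 - Pi.single j 1) = x i - x j := by
        simp [hL, mul_sub, Finset.sum_sub_distrib, Pi.single_apply, mul_ite]
      simp only [Set.mem_setOf_eq, this]
      exact lt_of_not_ge fun hge => absurd hge (not_le.mpr (h i j hij))
    have hconv' := convexHull_min hsub (convex_halfSpace_lt hlin 0) hconv
    simp [hL] at hconv'
  obtain ⟨k, ℓ, hkl, hx⟩ := key
  have h1 : μ ≤ A k ℓ * Real.exp (x k - x ℓ) := by
    have := hμle k ℓ (ne_of_gt hkl)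
    have he : (1 : ℝ) ≤ Real.exp (x k - x ℓ) := Real.one_le_exp hx
    calc μ ≤ A k ℓ := this
      _ = A k ℓ * 1 := (mul_one _).symm
      _ ≤ A k ℓ * Real.exp (x k - x ℓ) := by
          exact mul_le_mul_of_nonneg_left he (le_of_lt hkl)
  have h2 : A k ℓ * Real.exp (x k - x ℓ) ≤ ∑ j, A k j * Real.exp (x k - x j) := by
    refine Finset.single_le_sum (f := fun j => A k j * Real.exp (x k - x j)) (fun j _ => ?_) (Finset.mem_univ ℓ)
    exact mul_nonneg (hA k j) (Real.exp_pos _).le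
  have h3 : (∑ j, A k j * Real.exp (x k - x j)) ≤ ∑ i, ∑ j, A i j * Real.exp (x i - x j) := by
    refine Finset.single_le_sum (f := fun i => ∑ j, A i j * Real.exp (x i - x j)) (fun i _ => ?_) (Finset.mem_univ k)
    exact Finset.sum_nonneg fun j _ => mul_nonneg (hA i j) (Real.exp_pos _).le
  linarith
end

section
/- Let A ∈ ℝ₊^{n×n} be asymptotically balanceable, meaning for every ε > 0 there exists x ∈ ℝ^n such that ‖r(A(x)) - c(A(x))‖₁ / ‖A(x)‖₁ ≤ ε, where A(x)_{ij} = A_{ij} e^{x_i - x_j}, r and c are row- and column-sum vectors, and ‖A(x)‖₁ = ∑_{i,j} A_{ij} e^{x_i - x_j} > 0. Then the zero vector lies in the convex hull of W = {e_i - e_j : A_{ij} > 0}. -/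
/-!
For every `x`, weighting each `e_i - e_j` by `A i j * exp (x i - x j) / ‖A(x)‖₁` writes the
normalized imbalance `(r(A(x)) - c(A(x))) / ‖A(x)‖₁` as a point of `conv W`; its sup norm is at
most the normalized `ℓ¹` imbalance, hence as small as we like. So `0` lies in the closure of
`conv W`, which is closed because `W` is finite.
-/

open Finset

section NetFlow

variable {ι : Type*} [Fintype ι] [DecidableEq ι]

noncomputable def netFlow (w : ι → ι → ℝ) : ι → ℝ :=
  ∑ i, ∑ j, w i j • (Pi.single i 1 - Pi.single j 1 : ι → ℝ)

lemma netFlow_apply (w : ι → ι → ℝ) (ℓ : ι) :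
    netFlow w ℓ = ∑ j, w ℓ j - ∑ i, w i ℓ := by
  simp [netFlow, Finset.sum_apply, Pi.single_apply, mul_sub, sum_sub_distrib]

lemma norm_netFlow_le (w : ι → ι → ℝ) :
    ‖netFlow w‖ ≤ ∑ ℓ, |∑ j, w ℓ j - ∑ i, w i ℓ| := by
  refine (pi_norm_le_iff_of_nonneg (by positivity)).2 fun ℓ => ?_
  rw [Real.norm_eq_abs, netFlow_apply]
  exact single_le_sum (f := fun ℓ => |∑ j, w ℓ j - ∑ i, w i ℓ|) (fun _ _ => abs_nonneg _)
    (mem_univ ℓ)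

lemma finite_setOf_single_sub_single (P : ι → ι → Prop) :
    {v : ι → ℝ | ∃ i j, P i j ∧ v = Pi.single i 1 - Pi.single j 1}.Finite := by
  refine (Set.finite_range fun p : ι × ι => (Pi.single p.1 1 - Pi.single p.2 1 : ι → ℝ)).subset ?_
  rintro v ⟨i, j, -, rfl⟩
  exact ⟨(i, j), rfl⟩

lemma inv_smul_netFlow_mem_convexHull {w : ι → ι → ℝ} (hw : ∀ i j, 0 ≤ w i j)
    (hpos : 0 < ∑ i, ∑ j, w i j) :
    (∑ i, ∑ j, w i j)⁻¹ • netFlow w ∈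
      convexHull ℝ {v | ∃ i j, 0 < w i j ∧ v = Pi.single i 1 - Pi.single j 1} := by
  set t := univ.filter fun p : ι × ι => 0 < w p.1 p.2
  have hzero : ∀ p ∈ univ, p ∉ t → w p.1 p.2 = 0 := fun p _ hp =>
    le_antisymm (by simpa [t] using hp) (hw _ _)
  have hcm : t.centerMass (fun p => w p.1 p.2) (fun p => Pi.single p.1 1 - Pi.single p.2 1) =
      (∑ i, ∑ j, w i j)⁻¹ • netFlow w := by
    rw [centerMass_subset _ (subset_univ t) hzero, centerMass, netFlow,
      Fintype.sum_prod_type, Fintype.sum_prod_type]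
  rw [← hcm]
  refine t.centerMass_mem_convexHull (fun p _ => hw _ _) ?_ fun p hp => ⟨p.1, p.2, ?_, rfl⟩
  · rwa [sum_subset (subset_univ t) hzero, Fintype.sum_prod_type]
  · simpa [t] using hp

end NetFlow

/-- If `A` is asymptotically balanceable, then `0` lies in the convex hull of
`W = {e_i - e_j : A_{ij} > 0}`. -/
theorem asymptotically_balanceable_zero_mem_convexHull {n : ℕ} (A : Fin n → Fin n → ℝ)
    (hA : ∀ i j, 0 ≤ A i j)
    (hbal : ∀ ε : ℝ, 0 < ε → ∃ x : Fin n → ℝ,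
      0 < (∑ i, ∑ j, A i j * Real.exp (x i - x j)) ∧
      (∑ ℓ, |(∑ j, A ℓ j * Real.exp (x ℓ - x j)) - ∑ i, A i ℓ * Real.exp (x i - x ℓ)|)
        / (∑ i, ∑ j, A i j * Real.exp (x i - x j)) ≤ ε) :
    (0 : Fin n → ℝ) ∈ convexHull ℝ
      {v : Fin n → ℝ | ∃ i j, 0 < A i j ∧ v = Pi.single i 1 - Pi.single j 1} := by
  rw [← ((finite_setOf_single_sub_single fun i j => 0 < A i j).isClosed_convexHull ℝ).closure_eq,
    Metric.mem_closure_iff]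
  intro ε hε
  obtain ⟨x, hS, hbound⟩ := hbal (ε / 2) (half_pos hε)
  set w := fun i j => A i j * Real.exp (x i - x j)
  have hsupp (i j) : 0 < A i j * Real.exp (x i - x j) ↔ 0 < A i j :=
    mul_pos_iff_of_pos_right (Real.exp_pos _)
  refine ⟨_, by simpa only [hsupp] using
    inv_smul_netFlow_mem_convexHull (fun i j => mul_nonneg (hA i j) (Real.exp_nonneg _)) hS, ?_⟩
  calc dist 0 ((∑ i, ∑ j, w i j)⁻¹ • netFlow w)
      = (∑ i, ∑ j, w i j)⁻¹ * ‖netFlow w‖ := by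
        rw [dist_zero_left, norm_smul, norm_inv, Real.norm_of_nonneg hS.le]
    _ ≤ (∑ i, ∑ j, w i j)⁻¹ * ∑ ℓ, |∑ j, w ℓ j - ∑ i, w i ℓ| :=
        mul_le_mul_of_nonneg_left (norm_netFlow_le w) (inv_nonneg.2 hS.le)
    _ ≤ ε / 2 := by rwa [inv_mul_eq_div]
    _ < ε := half_lt_self hε
end

section
/- Let 0 < μ ≤ ν ≤ 1 and A ∈ [μ, ν]^{n×n} be entrywise positive, r ∈ ℝ^n strictly positive, y ∈ ℝ^n, δ ≥ 0, and let x' ∈ ℝ^n satisfy |x'_ℓ - ln(r_ℓ / ∑_j A_{ℓj} e^{y_j})| ≤ δ for all ℓ ∈ [n]. Then max_ℓ x'_ℓ - min_ℓ x'_ℓ ≤ 2δ + ln(ν/μ) + ln(r_max / r_min), where r_max and r_min are the largest and smallest entries of r. -/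
/-- Bounded variation of the row-scaling vector after a δ-approximate Sinkhorn update
for an entrywise-positive matrix: `x'_max - x'_min ≤ 2δ + ln(ν/μ) + ln(r_max/r_min)`. -/
theorem sinkhorn_bounded_variation {n : ℕ} [NeZero n] (μ ν : ℝ)
    (hμ : 0 < μ) (hμν : μ ≤ ν) (hν : ν ≤ 1)
    (A : Fin n → Fin n → ℝ) (hA : ∀ i j, A i j ∈ Set.Icc μ ν)
    (r : Fin n → ℝ) (hr : ∀ i, 0 < r i) (y x' : Fin n → ℝ) (δ : ℝ) (hδ : 0 ≤ δ)
    (hx' : ∀ ℓ, |x' ℓ - Real.log (r ℓ / ∑ j, A ℓ j * Real.exp (y j))| ≤ δ) :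
    (⨆ ℓ, x' ℓ) - (⨅ ℓ, x' ℓ) ≤
      2 * δ + Real.log (ν / μ) + Real.log ((⨆ i, r i) / ⨅ i, r i) := by
  have hn : Nonempty (Fin n) := ⟨⟨0, Nat.pos_of_ne_zero (NeZero.ne n)⟩⟩
  obtain ⟨a, ha⟩ := exists_eq_ciSup_of_finite (f := x')
  obtain ⟨b, hb⟩ := exists_eq_ciInf_of_finite (f := x')
  obtain ⟨c, hc⟩ := exists_eq_ciSup_of_finite (f := r)
  obtain ⟨d, hd⟩ := exists_eq_ciInf_of_finite (f := r)
  set T : ℝ := ∑ j, Real.exp (y j) with hT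
  have hT0 : 0 < T := Finset.sum_pos (fun j _ => Real.exp_pos _) ⟨a, Finset.mem_univ a⟩
  set S : Fin n → ℝ := fun ℓ => ∑ j, A ℓ j * Real.exp (y j) with hS
  have hSlb : ∀ ℓ, μ * T ≤ S ℓ := by
    intro ℓ
    rw [hS, hT, Finset.mul_sum]
    exact Finset.sum_le_sum fun j _ =>
      mul_le_mul_of_nonneg_right (hA ℓ j).1 (Real.exp_pos _).le
  have hSub : ∀ ℓ, S ℓ ≤ ν * T := by
    intro ℓ
    rw [hS, hT, Finset.mul_sum]
    exact Finset.sum_le_sum fun j _ =>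
      mul_le_mul_of_nonneg_right (hA ℓ j).2 (Real.exp_pos _).le
  have hS0 : ∀ ℓ, 0 < S ℓ := fun ℓ => lt_of_lt_of_le (by positivity) (hSlb ℓ)
  have ha' := abs_le.1 (hx' a)
  have hb' := abs_le.1 (hx' b)
  have hrc : r a ≤ r c := hc ▸ le_ciSup (Set.Finite.bddAbove (Set.finite_range r)) a
  have hrd : r d ≤ r b := hd ▸ ciInf_le (Set.Finite.bddBelow (Set.finite_range r)) b
  have hlSa : Real.log (μ * T) ≤ Real.log (S a) :=
    Real.log_le_log (by positivity) (hSlb a)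
  have hlSb : Real.log (S b) ≤ Real.log (ν * T) :=
    Real.log_le_log (hS0 b) (hSub b)
  have hlra : Real.log (r a) ≤ Real.log (r c) := Real.log_le_log (hr a) hrc
  have hlrb : Real.log (r d) ≤ Real.log (r b) := Real.log_le_log (hr d) hrd
  rw [← ha, ← hb, ← hc, ← hd]
  rw [Real.log_div (hr c).ne' (hr d).ne',
    Real.log_div (ne_of_gt (lt_of_lt_of_le hμ hμν)) hμ.ne']
  have e1 : Real.log (r a / S a) = Real.log (r a) - Real.log (S a) :=
    Real.log_div (hr a).ne' (hS0 a).ne'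
  have e2 : Real.log (r b / S b) = Real.log (r b) - Real.log (S b) :=
    Real.log_div (hr b).ne' (hS0 b).ne'
  have e3 : Real.log (μ * T) = Real.log μ + Real.log T :=
    Real.log_mul hμ.ne' hT0.ne'
  have e4 : Real.log (ν * T) = Real.log ν + Real.log T :=
    Real.log_mul (ne_of_gt (lt_of_lt_of_le hμ hμν)) hT0.ne'
  linarith [ha'.2, hb'.1]
end

section
/- Let A ∈ ℝ₊^{n×n} and let r, c ∈ ℝ₊^n with ‖r‖₁ = ‖c‖₁ = 1. Suppose (x, y) ∈ ℝ^n × ℝ^n satisfies c(A(x,y)) = c, where A(x,y)_{ij} = A_{ij} e^{x_i + y_j} and c(B)_j = ∑_i B_{ij}. Then for any (x*, y*) ∈ ℝ^n × ℝ^n, f(x, y) - f(x*, y*) ≤ ‖r(A(x,y)) - r‖₁ · (x_max - x_min + x*_max - x*_min), where f(x,y) = ∑_{i,j} A_{ij} e^{x_i+y_j} - ⟨r,x⟩ - ⟨c,y⟩, r(B)_i = ∑_j B_{ij}, and x_max, x_min denote the largest and smallest entries. -/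
open Finset Real

theorem Real.exp_sub_exp_le_exp_mul_sub (u v : ℝ) : exp u - exp v ≤ exp u * (u - v) := by
  have tangent := add_one_le_exp (v - u)
  have hv : exp v = exp u * exp (v - u) := by rw [← exp_add, add_sub_cancel]
  nlinarith [exp_pos u]

theorem sum_mul_exp_sub_sum_mul_exp_le {ι κ : Type*} [Fintype ι] [Fintype κ]
    (A : ι → κ → ℝ) (hA : ∀ i j, 0 ≤ A i j) (x x' : ι → ℝ) (y y' : κ → ℝ) :
    (∑ i, ∑ j, A i j * exp (x i + y j)) - ∑ i, ∑ j, A i j * exp (x' i + y' j) ≤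
      (∑ i, (∑ j, A i j * exp (x i + y j)) * (x i - x' i)) +
        ∑ j, (∑ i, A i j * exp (x i + y j)) * (y j - y' j) := by
  have termwise : ∀ i j, A i j * exp (x i + y j) - A i j * exp (x' i + y' j) ≤
      A i j * exp (x i + y j) * (x i - x' i) + A i j * exp (x i + y j) * (y j - y' j) := by
    intro i j
    have := mul_le_mul_of_nonneg_left (exp_sub_exp_le_exp_mul_sub (x i + y j) (x' i + y' j))
      (hA i j)
    linarith
  calc (∑ i, ∑ j, A i j * exp (x i + y j)) - ∑ i, ∑ j, A i j * exp (x' i + y' j)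
      = ∑ i, ∑ j, (A i j * exp (x i + y j) - A i j * exp (x' i + y' j)) := by
        simp only [sum_sub_distrib]
    _ ≤ ∑ i, ∑ j, (A i j * exp (x i + y j) * (x i - x' i) +
          A i j * exp (x i + y j) * (y j - y' j)) :=
        sum_le_sum fun i _ => sum_le_sum fun j _ => termwise i j
    _ = _ := by
        simp only [sum_add_distrib, sum_mul]
        exact congrArg _ sum_comm

theorem scalingPotential_sub_le {n : ℕ} (A : Fin n → Fin n → ℝ) (hA : ∀ i j, 0 ≤ A i j)
    (r c x y x' y' : Fin n → ℝ) :
    scalingPotential A r c x y - scalingPotential A r c x' y' ≤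
      (∑ i, ((∑ j, A i j * exp (x i + y j)) - r i) * (x i - x' i)) +
        ∑ j, ((∑ i, A i j * exp (x i + y j)) - c j) * (y j - y' j) := by
  have := sum_mul_exp_sub_sum_mul_exp_le A hA x x' y y'
  simp only [scalingPotential, sub_mul, mul_sub, sum_sub_distrib] at this ⊢
  linarith

theorem sum_mul_le_sum_abs_mul_of_sum_eq_zero {ι : Type*} [Fintype ι] {v u : ι → ℝ}
    (hv : ∑ i, v i = 0) (m M : ℝ) (hu : ∀ i, |u i - m| ≤ M) :
    ∑ i, v i * u i ≤ (∑ i, |v i|) * M :=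
  calc ∑ i, v i * u i = ∑ i, v i * (u i - m) := by
        simp only [mul_sub, sum_sub_distrib, ← sum_mul, hv, zero_mul, sub_zero]
    _ ≤ ∑ i, |v i| * M := sum_le_sum fun i _ =>
        (le_abs_self _).trans (abs_mul (v i) _ ▸ mul_le_mul_of_nonneg_left (hu i) (abs_nonneg _))
    _ = (∑ i, |v i|) * M := (sum_mul ..).symm

theorem abs_sub_sub_iInf_le {ι : Type*} [Finite ι] (x x' : ι → ℝ) (i : ι) :
    |(x i - x' i) - ((⨅ k, x k) - ⨅ k, x' k)| ≤
      (⨆ k, x k) - (⨅ k, x k) + ((⨆ k, x' k) - ⨅ k, x' k) := by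
  have := ciInf_le (Set.finite_range x).bddBelow i
  have := le_ciSup (Set.finite_range x).bddAbove i
  have := ciInf_le (Set.finite_range x').bddBelow i
  have := le_ciSup (Set.finite_range x').bddAbove i
  rw [abs_le]
  constructor <;> linarith

theorem adaptive_potential_gap_general {n : ℕ} (A : Fin n → Fin n → ℝ)
    (hA : ∀ i j, 0 ≤ A i j) (r c : Fin n → ℝ)
    (hr1 : ∑ i, r i = 1) (hc1 : ∑ j, c j = 1)
    (x y : Fin n → ℝ) (hcol : ∀ j, (∑ i, A i j * Real.exp (x i + y j)) = c j)
    (xs ys : Fin n → ℝ) :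
    scalingPotential A r c x y - scalingPotential A r c xs ys ≤
      (∑ i, |(∑ j, A i j * Real.exp (x i + y j)) - r i|) *
        ((⨆ i, x i) - (⨅ i, x i) + ((⨆ i, xs i) - ⨅ i, xs i)) := by
  have hgap := scalingPotential_sub_le A hA r c x y xs ys
  simp only [hcol, sub_self, zero_mul, sum_const_zero, add_zero] at hgap
  have hbalance : ∑ i, ((∑ j, A i j * exp (x i + y j)) - r i) = 0 := by
    rw [sum_sub_distrib, sum_comm, hr1]
    simp only [hcol, hc1, sub_self]
  exact hgap.trans <| sum_mul_le_sum_abs_mul_of_sum_eq_zero hbalance _ _ <|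
    abs_sub_sub_iInf_le x xs

/-- Adaptive potential gap bound: if `c(A(x,y)) = c` then for any `(x*, y*)`,
`f(x,y) - f(x*,y*) ≤ ‖r(A(x,y)) - r‖₁ · (x_max - x_min + x*_max - x*_min)`. -/
theorem adaptive_potential_gap {n : ℕ} [NeZero n] (A : Fin n → Fin n → ℝ)
    (hA : ∀ i j, 0 ≤ A i j) (r c : Fin n → ℝ)
    (hr : ∀ i, 0 ≤ r i) (hc : ∀ j, 0 ≤ c j) (hr1 : ∑ i, r i = 1) (hc1 : ∑ j, c j = 1)
    (x y : Fin n → ℝ) (hcol : ∀ j, (∑ i, A i j * Real.exp (x i + y j)) = c j)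
    (xs ys : Fin n → ℝ) :
    scalingPotential A r c x y - scalingPotential A r c xs ys ≤
      (∑ i, |(∑ j, A i j * Real.exp (x i + y j)) - r i|) *
        ((⨆ i, x i) - (⨅ i, x i) + ((⨆ i, xs i) - ⨅ i, xs i)) :=
  adaptive_potential_gap_general A hA r c hr1 hc1 x y hcol xs ys
end

section
/- Let 0 < μ < ν ≤ 1 and A ∈ [μ, ν]^{n×n}, and let r, c ∈ ℝ₊^n be strictly positive with arbitrary positive entries. Suppose (x*, y*) ∈ ℝ^n × ℝ^n exactly scales A to (r, c), i.e., r(A(x*, y*)) = r and c(A(x*, y*)) = c where A(x,y)_{ij} = A_{ij} e^{x_i + y_j}. Then x*_max - x*_min ≤ ln(ν/μ) + ln(r_max/r_min) and y*_max - y*_min ≤ ln(ν/μ) + ln(c_max/c_min). -/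
lemma exact_scaling_aux {n : ℕ} [NeZero n] (μ ν : ℝ)
    (hμ : 0 < μ) (hμν : μ < ν)
    (B : Fin n → Fin n → ℝ) (hB : ∀ i j, B i j ∈ Set.Icc μ ν)
    (r : Fin n → ℝ) (hr : ∀ i, 0 < r i)
    (xs ys : Fin n → ℝ)
    (hrow : ∀ i, (∑ j, B i j * Real.exp (xs i + ys j)) = r i) :
    (⨆ i, xs i) - (⨅ i, xs i) ≤ Real.log (ν / μ) + Real.log ((⨆ i, r i) / ⨅ i, r i) := by
  have hν : 0 < ν := hμ.trans hμν
  set T := ∑ j, Real.exp (ys j) with hT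
  have hTpos : 0 < T :=
    Finset.sum_pos (fun j _ => Real.exp_pos _) ⟨0, Finset.mem_univ 0⟩
  set S := fun i => ∑ j, B i j * Real.exp (ys j) with hS
  have hSr : ∀ i, r i = Real.exp (xs i) * S i := by
    intro i
    rw [← hrow i, hS, Finset.mul_sum]
    refine Finset.sum_congr rfl fun j _ => ?_
    rw [Real.exp_add]; ring
  have hSlb : ∀ i, μ * T ≤ S i := by
    intro i
    rw [hT, Finset.mul_sum]
    exact Finset.sum_le_sum fun j _ =>
      mul_le_mul_of_nonneg_right (hB i j).1 (Real.exp_pos _).le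
  have hSub : ∀ i, S i ≤ ν * T := by
    intro i
    rw [hT, Finset.mul_sum]
    exact Finset.sum_le_sum fun j _ =>
      mul_le_mul_of_nonneg_right (hB i j).2 (Real.exp_pos _).le
  have hSpos : ∀ i, 0 < S i := fun i => lt_of_lt_of_le (mul_pos hμ hTpos) (hSlb i)
  obtain ⟨i0, hi0⟩ := Finite.exists_max xs
  obtain ⟨k0, hk0⟩ := Finite.exists_min xs
  have bddx : BddAbove (Set.range xs) := (Set.finite_range xs).bddAbove
  have bddx' : BddBelow (Set.range xs) := (Set.finite_range xs).bddBelow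
  have hsup : (⨆ i, xs i) = xs i0 :=
    le_antisymm (ciSup_le hi0) (le_ciSup bddx i0)
  have hinf : (⨅ i, xs i) = xs k0 :=
    le_antisymm (ciInf_le bddx' k0) (le_ciInf hk0)
  have bddr : BddAbove (Set.range r) := (Set.finite_range r).bddAbove
  have bddr' : BddBelow (Set.range r) := (Set.finite_range r).bddBelow
  have hrsup : r i0 ≤ ⨆ i, r i := le_ciSup bddr i0
  have hrinf : (⨅ i, r i) ≤ r k0 := ciInf_le bddr' k0
  have hrinfpos : 0 < ⨅ i, r i := by
    obtain ⟨j0, hj0⟩ := Finite.exists_min r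
    have : (⨅ i, r i) = r j0 := le_antisymm (ciInf_le bddr' j0) (le_ciInf hj0)
    rw [this]; exact hr j0
  have hrsuppos : 0 < ⨆ i, r i := lt_of_lt_of_le hrinfpos (hrinf.trans (le_ciSup bddr k0))
  rw [hsup, hinf]
  have hC : (0:ℝ) < (ν / μ) * ((⨆ i, r i) / ⨅ i, r i) :=
    mul_pos (div_pos hν hμ) (div_pos hrsuppos hrinfpos)
  have key : xs i0 - xs k0 ≤ Real.log ((ν / μ) * ((⨆ i, r i) / ⨅ i, r i)) := by
    rw [Real.le_log_iff_exp_le hC]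
    have hexp : Real.exp (xs i0 - xs k0) = (r i0 * S k0) / (r k0 * S i0) := by
      rw [hSr i0, hSr k0, Real.exp_sub, mul_assoc, mul_assoc, mul_div_mul_comm,
        mul_comm (S i0), div_self (mul_pos (hSpos k0) (hSpos i0)).ne', mul_one]
    rw [hexp]
    have h1 : r i0 * S k0 ≤ (⨆ i, r i) * (ν * T) :=
      mul_le_mul hrsup (hSub k0) (hSpos k0).le hrsuppos.le
    have h2 : (⨅ i, r i) * (μ * T) ≤ r k0 * S i0 :=
      mul_le_mul hrinf (hSlb i0) (mul_pos hμ hTpos).le (hr k0).le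
    have h3 : (r i0 * S k0) / (r k0 * S i0) ≤
        ((⨆ i, r i) * (ν * T)) / ((⨅ i, r i) * (μ * T)) :=
      div_le_div₀ (by positivity) h1 (by positivity) h2
    refine h3.trans (le_of_eq ?_)
    field_simp
  calc xs i0 - xs k0 ≤ _ := key
    _ = _ := Real.log_mul (by positivity) (by positivity)

/-- Variation-norm bound for exact scaling vectors of an entrywise-positive matrix:
if `(x*, y*)` exactly scales `A ∈ [μ,ν]^{n×n}` to `(r, c)`, then
`x*_max - x*_min ≤ ln(ν/μ) + ln(r_max/r_min)` and
`y*_max - y*_min ≤ ln(ν/μ) + ln(c_max/c_min)`. -/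
theorem exact_scaling_bounded_variation {n : ℕ} [NeZero n] (μ ν : ℝ)
    (hμ : 0 < μ) (hμν : μ < ν) (hν : ν ≤ 1)
    (A : Fin n → Fin n → ℝ) (hA : ∀ i j, A i j ∈ Set.Icc μ ν)
    (r c : Fin n → ℝ) (hr : ∀ i, 0 < r i) (hc : ∀ j, 0 < c j)
    (xs ys : Fin n → ℝ)
    (hrow : ∀ i, (∑ j, A i j * Real.exp (xs i + ys j)) = r i)
    (hcol : ∀ j, (∑ i, A i j * Real.exp (xs i + ys j)) = c j) :
    (⨆ i, xs i) - (⨅ i, xs i) ≤ Real.log (ν / μ) + Real.log ((⨆ i, r i) / ⨅ i, r i) ∧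
    (⨆ j, ys j) - (⨅ j, ys j) ≤ Real.log (ν / μ) + Real.log ((⨆ j, c j) / ⨅ j, c j) := by
  constructor
  · exact exact_scaling_aux μ ν hμ hμν A hA r hr xs ys hrow
  · refine exact_scaling_aux μ ν hμ hμν (fun j i => A i j)
      (fun j i => hA i j) c hc ys xs (fun j => ?_)
    rw [← hcol j]
    exact Finset.sum_congr rfl fun i _ => by rw [add_comm]
end
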